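/- arXiv:2403.00971 — 4 statements merged into one kernel-verified Lean document; each statement's English description precedes it below -/
import Mathlib

section
/- There exists b* < 0 with the following properties. Write f_b(N) := 1/I(b,N) and let N_b* denote the unique fixed point of f_b for b < 0. (i) For every b with b* < b < 0 one has −1 < f_b'(N_b*) < 0, so N_b* is a locally asymptotically stable fixed point of the recurrence N_{k+1,∞} = f_b(N_{k,∞}). (ii) For every b < b* one has f_b'(N_b*) < −1, and for every initial value N_{0,∞} ≥ 0 with N_{0,∞} ≠ N_b* there exist N⁻ ≠ N⁺ with min(N⁻,N⁺) < N_b* < max(N⁻,N⁺), f_b(N⁻) = N⁺ and f_b(N⁺) = N⁻, such that one of the subsequences {N_{2k,∞}}, {N_{2k+1,∞}} converges to N⁻ and the other converges to N⁺. -/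
/-!
Write `m = b N`. Swapping the order of integration turns `I(b, N)` into
`F(m) = ∫_{V_R - m}^{V_F - m} h`, where `h(s) = e^{s²/2} Φ(s)` is the Mills ratio at `-s`.
The two Mills bounds say exactly that `h` and `s ↦ s h(s)` are strictly increasing, so `F` is
decreasing and strictly convex. At the fixed point `N = N_b*` one has `b = m F(m)` and
`f_b'(N) = -N D(m) - 1` with `D(m) = m F'(m) - F(m)`. On `m ≤ 0`, `D' = m F'' < 0`,
`D(0) = -F(0) < 0` and `D(m) > 0` for `m ≪ 0`, so `D` has a single zero `m₀ < 0`; as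
`m ↦ m F(m)` is increasing there, `b* = m₀ F(m₀)` separates `f_b'(N) ∈ (-1, 0)` from
`f_b'(N) < -1`. In the first regime `N` is attracting. In the second it repels `f_b ∘ f_b`,
which is increasing, so the even and odd subsequences are monotone and bounded and converge
to a 2-cycle that cannot be the fixed point.
-/

open MeasureTheory Real Filter

/-- The function `I(b,N)` from the NNLIF model, with explicit dependence on the
connectivity parameter `b`. -/
noncomputable def Ifun (V_R V_F b N : ℝ) : ℝ :=
  ∫ v in Set.Iic V_F,
    Real.exp (-(v - b * N) ^ 2 / 2) * ∫ w in (max v V_R)..V_F, Real.exp ((w - b * N) ^ 2 / 2)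

open Set Topology

noncomputable def gauss (t : ℝ) : ℝ := exp (-t ^ 2 / 2)

lemma gauss_pos (t : ℝ) : 0 < gauss t := exp_pos _

lemma continuous_gauss : Continuous gauss := by
  unfold gauss; fun_prop

lemma integrable_gauss : Integrable gauss := by
  convert integrable_exp_neg_mul_sq (by norm_num : (0 : ℝ) < 1 / 2) using 2 with t
  rw [gauss]; ring_nf

lemma hasDerivAt_gauss (t : ℝ) : HasDerivAt gauss (-t * gauss t) t := by
  have h : HasDerivAt (fun x : ℝ => -x ^ 2 / 2) (-t) t := by
    convert ((hasDerivAt_pow 2 t).div_const 2).neg using 1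
    all_goals first | (ext x; simp [neg_div]) | simp
  have := h.exp
  rwa [mul_comm] at this

lemma exp_sq_half_mul_gauss (t : ℝ) : exp (t ^ 2 / 2) * gauss t = 1 := by
  rw [gauss, ← exp_add]; ring_nf; exact exp_zero

lemma tendsto_gauss_atBot : Tendsto gauss atBot (𝓝 0) :=
  tendsto_exp_atBot.comp <|
    ((tendsto_neg_atTop_atBot.comp ((tendsto_pow_atTop two_ne_zero).comp
      tendsto_neg_atBot_atTop)).atBot_div_const two_pos).congr fun t => by simp

lemma integrable_mul_gauss : Integrable fun t => t * gauss t := by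
  convert integrable_mul_exp_neg_mul_sq (by norm_num : (0 : ℝ) < 1 / 2) using 2 with t
  rw [gauss]; ring_nf

lemma integral_Iic_mul_gauss (s : ℝ) : ∫ t in Iic s, t * gauss t = -gauss s := by
  rw [integral_Iic_of_hasDerivAt_of_tendsto' (f := -gauss)
    (fun t _ => by simpa using (hasDerivAt_gauss t).neg) integrable_mul_gauss.integrableOn
    (by convert tendsto_gauss_atBot.neg; simp)]
  simp

/-- The standard Gaussian distribution function `Φ`, unnormalized: its total mass is `√(2π)`. -/
noncomputable def gaussCDF (s : ℝ) : ℝ := ∫ t in Iic s, gauss t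

lemma gaussCDF_pos (s : ℝ) : 0 < gaussCDF s := by
  rw [gaussCDF, setIntegral_pos_iff_support_of_nonneg_ae
    (.of_forall fun t => (gauss_pos t).le) integrable_gauss.integrableOn]
  simp [Function.support, (gauss_pos _).ne']

lemma hasDerivAt_gaussCDF (s : ℝ) : HasDerivAt gaussCDF (gauss s) s := by
  have hprim : gaussCDF = fun u => gaussCDF 0 + ∫ t in (0 : ℝ)..u, gauss t := by
    ext u
    rw [gaussCDF, gaussCDF, ← intervalIntegral.integral_Iic_sub_Iic
      integrable_gauss.integrableOn integrable_gauss.integrableOn]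
    ring
  rw [hprim]
  exact ((continuous_gauss.integral_hasStrictDerivAt 0 s).hasDerivAt).const_add _

lemma gaussCDF_strictMono : StrictMono gaussCDF :=
  strictMono_of_hasDerivAt_pos hasDerivAt_gaussCDF gauss_pos

/-- Upper Mills bound `-s·Φ(s) < φ(s)`, from `s·Φ(s) + φ(s) = ∫_{t ≤ s} (s - t) φ(t) dt`. -/
lemma mul_gaussCDF_add_gauss_pos (s : ℝ) : 0 < s * gaussCDF s + gauss s := by
  have hint : Integrable fun t => (s - t) * gauss t := by
    refine ((integrable_gauss.const_mul s).sub integrable_mul_gauss).congr (.of_forall fun t => ?_)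
    simp only [Pi.sub_apply]; ring
  have hpos : 0 < ∫ t in Iic s, (s - t) * gauss t := by
    rw [setIntegral_pos_iff_support_of_nonneg_ae _ hint.integrableOn]
    · refine lt_of_lt_of_le (by simp : (0 : ENNReal) < volume (Iio s)) (measure_mono ?_)
      intro t (ht : t < s)
      exact ⟨mul_ne_zero (sub_ne_zero.2 ht.ne') (gauss_pos t).ne', ht.le⟩
    · filter_upwards [ae_restrict_mem measurableSet_Iic] with t (ht : t ≤ s)
      exact mul_nonneg (sub_nonneg.2 ht) (gauss_pos t).le
  have hval : ∫ t in Iic s, (s - t) * gauss t = s * gaussCDF s + gauss s := by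
    simp only [sub_mul]
    rw [integral_sub (integrable_gauss.const_mul s).integrableOn integrable_mul_gauss.integrableOn,
      integral_const_mul, integral_Iic_mul_gauss, gaussCDF, sub_neg_eq_add]
  exact hval ▸ hpos

lemma tendsto_gaussCDF_atBot : Tendsto gaussCDF atBot (𝓝 0) := by
  refine squeeze_zero' (.of_forall fun s => (gaussCDF_pos s).le) ?_ tendsto_gauss_atBot
  filter_upwards [eventually_le_atBot (-1)] with s hs
  nlinarith [mul_gaussCDF_add_gauss_pos s, gaussCDF_pos s]

lemma pos_of_hasDerivAt_pos_of_tendsto_atBot {u u' : ℝ → ℝ} (hu : ∀ x, HasDerivAt u (u' x) x)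
    (hu' : ∀ x, 0 < u' x) (hlim : Tendsto u atBot (𝓝 0)) (s : ℝ) : 0 < u s := by
  have hmono := strictMono_of_hasDerivAt_pos hu hu'
  have hle : 0 ≤ u (s - 1) :=
    le_of_tendsto hlim ((eventually_le_atBot (s - 1)).mono fun t ht => hmono.monotone ht)
  exact hle.trans_lt (hmono (by linarith))

/-- Lower Mills bound: the left side has derivative `2φ(s)/(1 + s²)²` and vanishes at `-∞`. -/
lemma gaussCDF_add_div_mul_gauss_pos (s : ℝ) : 0 < gaussCDF s + s / (1 + s ^ 2) * gauss s := by
  refine pos_of_hasDerivAt_pos_of_tendsto_atBot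
    (u := fun t => gaussCDF t + t / (1 + t ^ 2) * gauss t)
    (u' := fun t => 2 * gauss t / (1 + t ^ 2) ^ 2)
    (fun t => ?_) (fun t => by have := gauss_pos t; positivity) ?_ s
  · have hq : HasDerivAt (fun x : ℝ => x / (1 + x ^ 2))
        ((1 * (1 + t ^ 2) - t * (2 * t)) / (1 + t ^ 2) ^ 2) t :=
      (hasDerivAt_id t).div (by simpa using (hasDerivAt_pow 2 t).const_add 1) (by positivity)
    refine ((hasDerivAt_gaussCDF t).add (hq.mul (hasDerivAt_gauss t))).congr_deriv ?_
    field_simp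
    ring
  · have hbdd : Tendsto (fun x : ℝ => x / (1 + x ^ 2) * gauss x) atBot (𝓝 0) := by
      refine squeeze_zero_norm (fun x => ?_) tendsto_gauss_atBot
      rw [norm_mul, Real.norm_of_nonneg (gauss_pos x).le, norm_div, Real.norm_of_nonneg
        (by positivity : (0 : ℝ) ≤ 1 + x ^ 2)]
      refine mul_le_of_le_one_left (gauss_pos x).le ((div_le_one (by positivity)).2 ?_)
      rw [Real.norm_eq_abs]
      nlinarith [abs_mul_abs_self x, abs_nonneg x, sq_nonneg (|x| - 1)]
    simpa using tendsto_gaussCDF_atBot.add hbdd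

/-- `mills s = Φ(s)/φ(s)`, i.e. the Mills ratio of the standard normal distribution at `-s`. -/
noncomputable def mills (s : ℝ) : ℝ := exp (s ^ 2 / 2) * gaussCDF s

lemma mills_pos (s : ℝ) : 0 < mills s := mul_pos (exp_pos _) (gaussCDF_pos s)

lemma hasDerivAt_mills (s : ℝ) : HasDerivAt mills (s * mills s + 1) s := by
  have h : HasDerivAt (fun t : ℝ => exp (t ^ 2 / 2)) (exp (s ^ 2 / 2) * s) s := by
    convert ((hasDerivAt_pow 2 s).div_const 2).exp using 1
    simp
  refine (h.mul (hasDerivAt_gaussCDF s)).congr_deriv ?_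
  rw [mul_assoc, exp_sq_half_mul_gauss, mills]
  ring

lemma continuous_mills : Continuous mills :=
  continuous_iff_continuousAt.2 fun s => (hasDerivAt_mills s).continuousAt

lemma mul_mills_add_one_pos (s : ℝ) : 0 < s * mills s + 1 := by
  have h : s * mills s + 1 = exp (s ^ 2 / 2) * (s * gaussCDF s + gauss s) := by
    rw [mul_add, ← exp_sq_half_mul_gauss s, mills]; ring
  rw [h]
  exact mul_pos (exp_pos _) (mul_gaussCDF_add_gauss_pos s)

lemma mills_strictMono : StrictMono mills :=
  strictMono_of_hasDerivAt_pos hasDerivAt_mills mul_mills_add_one_pos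

lemma exp_sub_mul_mills_le {s t : ℝ} (hst : s ≤ t) :
    exp (t ^ 2 / 2 - s ^ 2 / 2) * mills s ≤ mills t := by
  rw [mills, mills, ← mul_assoc, ← exp_add, sub_add_cancel]
  exact mul_le_mul_of_nonneg_left (gaussCDF_strictMono.monotone hst) (exp_pos _).le

lemma mul_mills_strictMono : StrictMono fun s => s * mills s := by
  refine strictMono_of_hasDerivAt_pos (f' := fun s => (1 + s ^ 2) * mills s + s)
    (fun s => ?_) (fun s => ?_)
  · exact ((hasDerivAt_id s).mul (hasDerivAt_mills s)).congr_deriv (by simp only [id]; ring)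
  · have h : (1 + s ^ 2) * mills s + s
        = (1 + s ^ 2) * exp (s ^ 2 / 2) * (gaussCDF s + s / (1 + s ^ 2) * gauss s) := by
      have := exp_sq_half_mul_gauss s
      rw [mills]
      field_simp
      linear_combination (-s) * this
    rw [h]
    have := gaussCDF_add_div_mul_gauss_pos s
    positivity

lemma setIntegral_Iic_gauss_sub (w m : ℝ) : ∫ v in Iic w, gauss (v - m) = gaussCDF (w - m) := by
  have := (measurePreserving_sub_right volume m).setIntegral_preimage_emb
    (measurableEmbedding_subRight m) gauss (Iic (w - m))
  rwa [preimage_sub_const_Iic, sub_add_cancel] at this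

section Fubini

variable {V_R V_F : ℝ}

/-- The integrand of `Ifun` as a function on the plane `(v, w)`, cut off to `v < w`. -/
noncomputable def firingKernel (m : ℝ) : ℝ × ℝ → ℝ :=
  indicator {q | q.1 < q.2} fun q => gauss (q.1 - m) * exp ((q.2 - m) ^ 2 / 2)

lemma integrable_firingKernel (m : ℝ) : Integrable (firingKernel m)
    ((volume.restrict (Iic V_F)).prod (volume.restrict (Ioc V_R V_F))) := by
  refine Integrable.indicator ?_ (measurableSet_lt measurable_fst measurable_snd)
  exact (integrable_gauss.comp_sub_right m).restrict.mul_prod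
    ((by fun_prop : Continuous fun w => exp ((w - m) ^ 2 / 2)).integrableOn_Ioc)

lemma setIntegral_firingKernel_snd (hV : V_R ≤ V_F) (m : ℝ) {v : ℝ} (hv : v ≤ V_F) :
    ∫ w in Ioc V_R V_F, firingKernel m (v, w) =
      gauss (v - m) * ∫ w in (max v V_R)..V_F, exp ((w - m) ^ 2 / 2) := by
  have hslice : (fun w => firingKernel m (v, w))
      = indicator (Ioi v) fun w => gauss (v - m) * exp ((w - m) ^ 2 / 2) := by
    ext w
    simp only [firingKernel, indicator_apply, mem_ofPred_eq, mem_Ioi]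
  have hset : Ioi v ∩ Ioc V_R V_F = Ioc (max v V_R) V_F := by
    ext w
    simp only [mem_inter_iff, mem_Ioi, mem_Ioc, max_lt_iff]
    tauto
  rw [hslice, integral_indicator measurableSet_Ioi, Measure.restrict_restrict measurableSet_Ioi,
    hset, intervalIntegral.integral_of_le (max_le hv hV), integral_const_mul]

lemma setIntegral_firingKernel_fst (m : ℝ) {w : ℝ} (hw : w ≤ V_F) :
    ∫ v in Iic V_F, firingKernel m (v, w) = mills (w - m) := by
  have hslice : (fun v => firingKernel m (v, w))
      = fun v => indicator (Iio w) (fun v => gauss (v - m)) v * exp ((w - m) ^ 2 / 2) := by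
    ext v
    simp only [firingKernel, indicator_apply, mem_ofPred_eq, mem_Iio]
    split_ifs <;> simp
  have hset : Iio w ∩ Iic V_F = Iio w := inter_eq_left.2 fun v hv => (le_of_lt hv).trans hw
  rw [hslice, integral_mul_const, integral_indicator measurableSet_Iio,
    Measure.restrict_restrict measurableSet_Iio, hset, setIntegral_congr_set Iio_ae_eq_Iic,
    setIntegral_Iic_gauss_sub, mills, mul_comm]

end Fubini

/-- `I(b, N)` depends on `b` and `N` only through the mean `m = b N`. -/
noncomputable def millsIntegral (V_R V_F m : ℝ) : ℝ := ∫ s in (V_R - m)..(V_F - m), mills s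

lemma Ifun_eq_millsIntegral {V_R V_F : ℝ} (hV : V_R < V_F) (b N : ℝ) :
    Ifun V_R V_F b N = millsIntegral V_R V_F (b * N) := by
  set m := b * N
  calc Ifun V_R V_F b N
      = ∫ v in Iic V_F, ∫ w in Ioc V_R V_F, firingKernel m (v, w) :=
        setIntegral_congr_fun measurableSet_Iic fun v hv =>
          (setIntegral_firingKernel_snd hV.le m hv).symm
    _ = ∫ w in Ioc V_R V_F, ∫ v in Iic V_F, firingKernel m (v, w) :=
        integral_integral_swap (integrable_firingKernel m)
    _ = ∫ w in Ioc V_R V_F, mills (w - m) :=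
        setIntegral_congr_fun measurableSet_Ioc fun w hw => setIntegral_firingKernel_fst m hw.2
    _ = millsIntegral V_R V_F m := by
        rw [← intervalIntegral.integral_of_le hV.le, intervalIntegral.integral_comp_sub_right,
          millsIntegral]

section MillsIntegral

variable {V_R V_F : ℝ}

lemma millsIntegral_pos (hV : V_R < V_F) (m : ℝ) : 0 < millsIntegral V_R V_F m :=
  intervalIntegral.intervalIntegral_pos_of_pos (continuous_mills.intervalIntegrable _ _) mills_pos
    (by linarith)

lemma millsIntegral_le (hV : V_R < V_F) (m : ℝ) :
    millsIntegral V_R V_F m ≤ (V_F - V_R) * mills (V_F - m) := by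
  calc millsIntegral V_R V_F m ≤ ∫ _ in (V_R - m)..(V_F - m), mills (V_F - m) :=
        intervalIntegral.integral_mono_on (by linarith) (continuous_mills.intervalIntegrable _ _)
          intervalIntegrable_const fun s hs => mills_strictMono.monotone hs.2
    _ = (V_F - V_R) * mills (V_F - m) := by
        rw [intervalIntegral.integral_const, smul_eq_mul]; ring

lemma hasDerivAt_millsIntegral (m : ℝ) :
    HasDerivAt (millsIntegral V_R V_F) (mills (V_R - m) - mills (V_F - m)) m := by
  have hprim : ∀ c : ℝ, HasDerivAt (fun m => ∫ s in (0 : ℝ)..(c - m), mills s) (-mills (c - m)) m :=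
    fun c => (continuous_mills.integral_hasStrictDerivAt 0 (c - m)).hasDerivAt.comp_const_sub c m
  have hdiff : millsIntegral V_R V_F
      = fun m => (∫ s in (0 : ℝ)..(V_F - m), mills s) - ∫ s in (0 : ℝ)..(V_R - m), mills s := by
    ext m
    rw [millsIntegral, intervalIntegral.integral_interval_sub_left
      (continuous_mills.intervalIntegrable _ _) (continuous_mills.intervalIntegrable _ _)]
  rw [hdiff]
  exact ((hprim V_F).sub (hprim V_R)).congr_deriv (by ring)

lemma continuous_millsIntegral : Continuous (millsIntegral V_R V_F) :=
  continuous_iff_continuousAt.2 fun m => hasDerivAt_millsIntegral m |>.continuousAt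

lemma millsIntegral_strictAnti (hV : V_R < V_F) : StrictAnti (millsIntegral V_R V_F) :=
  strictAnti_of_hasDerivAt_neg hasDerivAt_millsIntegral fun m =>
    sub_neg.2 (mills_strictMono (by linarith))

/-- With `m = b N` at a fixed point `N` of `f_b = 1 / I(b, ·)`, one has
`f_b'(N) = -N · bifurcationFun V_R V_F m - 1`. -/
noncomputable def bifurcationFun (V_R V_F m : ℝ) : ℝ :=
  m * (mills (V_R - m) - mills (V_F - m)) - millsIntegral V_R V_F m

lemma continuous_bifurcationFun : Continuous (bifurcationFun V_R V_F) := by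
  unfold bifurcationFun
  have := continuous_mills
  have := continuous_millsIntegral (V_R := V_R) (V_F := V_F)
  fun_prop

lemma hasDerivAt_bifurcationFun (m : ℝ) : HasDerivAt (bifurcationFun V_R V_F)
    (m * ((V_F - m) * mills (V_F - m) - (V_R - m) * mills (V_R - m))) m := by
  have hmills : ∀ c : ℝ, HasDerivAt (fun m => mills (c - m)) (-((c - m) * mills (c - m) + 1)) m :=
    fun c => (hasDerivAt_mills (c - m)).comp_const_sub c m
  exact (((hasDerivAt_id m).mul ((hmills V_R).sub (hmills V_F))).sub
    (hasDerivAt_millsIntegral m)).congr_deriv (by simp only [id, Pi.sub_apply]; ring)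

lemma bifurcationFun_strictAntiOn (hV : V_R < V_F) :
    StrictAntiOn (bifurcationFun V_R V_F) (Iic 0) := by
  refine strictAntiOn_of_hasDerivWithinAt_neg (convex_Iic 0)
    continuous_bifurcationFun.continuousOn
    (fun m _ => (hasDerivAt_bifurcationFun m).hasDerivWithinAt) fun m hm => ?_
  rw [interior_Iic] at hm
  exact mul_neg_of_neg_of_pos hm (sub_pos.2 (mul_mills_strictMono (by linarith)))

lemma neg_millsIntegral_lt_bifurcationFun (hV : V_R < V_F) {m : ℝ} (hm : m < 0) :
    -millsIntegral V_R V_F m < bifurcationFun V_R V_F m := by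
  have := mills_strictMono (show V_R - m < V_F - m by linarith)
  unfold bifurcationFun
  nlinarith

/-- For `m ≪ 0` the factor `exp((V_F - m)²/2 - (V_R - m)²/2)` makes `mills (V_F - m)` dominate. -/
lemma exists_bifurcationFun_pos (hV : V_R < V_F) : ∃ m < 0, 0 < bifurcationFun V_R V_F m := by
  set c := V_F - V_R
  have hc : 0 < c := sub_pos.2 hV
  obtain ⟨m, hm₁, hm₂⟩ := ((eventually_le_atBot ((V_F + V_R) / 2 - 1 / c)).and
    (eventually_lt_atBot (-2 * c))).exists
  have hratio : 2 * mills (V_R - m) ≤ mills (V_F - m) := by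
    have hexp : 1 ≤ (V_F - m) ^ 2 / 2 - (V_R - m) ^ 2 / 2 := by
      have : 1 / c * c = 1 := one_div_mul_cancel hc.ne'
      nlinarith
    have h2 : 2 ≤ exp ((V_F - m) ^ 2 / 2 - (V_R - m) ^ 2 / 2) := by
      linarith [add_one_le_exp ((V_F - m) ^ 2 / 2 - (V_R - m) ^ 2 / 2)]
    exact (mul_le_mul_of_nonneg_right h2 (mills_pos _).le).trans
      (exp_sub_mul_mills_le (by linarith))
  refine ⟨m, by linarith, ?_⟩
  have := millsIntegral_le hV m
  have := mills_pos (V_F - m)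
  unfold bifurcationFun
  nlinarith

lemma exists_bifurcationFun_eq_zero (hV : V_R < V_F) :
    ∃ m < 0, bifurcationFun V_R V_F m = 0 := by
  obtain ⟨m₁, hm₁, hpos⟩ := exists_bifurcationFun_pos hV
  have hzero : bifurcationFun V_R V_F 0 < 0 := by
    simpa [bifurcationFun] using millsIntegral_pos hV 0
  obtain ⟨m, hm, hm0⟩ := intermediate_value_Ioo' hm₁.le continuous_bifurcationFun.continuousOn
    ⟨hzero, hpos⟩
  exact ⟨m, hm.2, hm0⟩

lemma mul_millsIntegral_strictMonoOn (hV : V_R < V_F) :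
    StrictMonoOn (fun m => m * millsIntegral V_R V_F m) (Iic 0) := by
  refine strictMonoOn_of_hasDerivWithinAt_pos (convex_Iic 0)
    (continuous_id.mul continuous_millsIntegral).continuousOn
    (fun m _ => ((hasDerivAt_id m).mul (hasDerivAt_millsIntegral m)).hasDerivWithinAt)
    fun m hm => ?_
  rw [interior_Iic] at hm
  have hmF' := neg_millsIntegral_lt_bifurcationFun hV hm
  have := millsIntegral_pos hV m
  rw [bifurcationFun] at hmF'
  simp only [id, one_mul]
  linarith

lemma bifurcationFun_neg_iff (hV : V_R < V_F) {m₀ m : ℝ} (hm₀ : m₀ ≤ 0)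
    (hD₀ : bifurcationFun V_R V_F m₀ = 0) (hm : m ≤ 0) :
    bifurcationFun V_R V_F m < 0 ↔ m₀ * millsIntegral V_R V_F m₀ < m * millsIntegral V_R V_F m := by
  rw [← hD₀, (bifurcationFun_strictAntiOn hV).lt_iff_gt hm hm₀,
    (mul_millsIntegral_strictMonoOn hV).lt_iff_lt hm₀ hm]

lemma bifurcationFun_pos_iff (hV : V_R < V_F) {m₀ m : ℝ} (hm₀ : m₀ ≤ 0)
    (hD₀ : bifurcationFun V_R V_F m₀ = 0) (hm : m ≤ 0) :
    0 < bifurcationFun V_R V_F m ↔ m * millsIntegral V_R V_F m < m₀ * millsIntegral V_R V_F m₀ := by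
  rw [← hD₀, (bifurcationFun_strictAntiOn hV).lt_iff_gt hm₀ hm,
    (mul_millsIntegral_strictMonoOn hV).lt_iff_lt hm hm₀]

end MillsIntegral

section Dynamics

variable {f : ℝ → ℝ} {p d : ℝ}

lemma HasDerivAt.eventually_abs_sub_le (hd : HasDerivAt f d p) {q : ℝ} (hq : |d| < q) :
    ∀ᶠ y in 𝓝 p, |f y - f p| ≤ q * |y - p| := by
  have h := (hd.hasDerivWithinAt (s := univ)).limsup_norm_slope_le hq
  rw [nhdsWithin_univ] at h
  filter_upwards [h] with y hy
  rcases eq_or_ne y p with rfl | hyp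
  · simp
  · rw [Real.norm_eq_abs, Real.norm_eq_abs, inv_mul_lt_iff₀ (abs_pos.2 (sub_ne_zero.2 hyp))] at hy
    linarith

lemma HasDerivAt.eventually_lt_abs_sub (hd : HasDerivAt f d p) {q : ℝ} (hq : q < |d|) :
    ∀ᶠ y in 𝓝[≠] p, q * |y - p| < |f y - f p| := by
  filter_upwards [(hasDerivAt_iff_tendsto_slope.1 hd).abs.eventually (lt_mem_nhds hq),
    self_mem_nhdsWithin] with y hy (hyp : y ≠ p)
  rwa [slope_def_field, abs_div, lt_div_iff₀ (abs_pos.2 (sub_ne_zero.2 hyp))] at hy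

lemma exists_tendsto_of_abs_deriv_lt_one (hfp : f p = p) (hd : HasDerivAt f d p) (hd1 : |d| < 1) :
    ∃ δ, 0 < δ ∧ ∀ x : ℕ → ℝ, (∀ k, x (k + 1) = f (x k)) → |x 0 - p| < δ →
      Tendsto x atTop (𝓝 p) := by
  set q := (1 + |d|) / 2 with hq
  have hq0 : 0 ≤ q := by positivity
  have hq1 : q < 1 := by linarith
  obtain ⟨δ, hδ, hball⟩ :=
    Metric.eventually_nhds_iff_ball.1 (hd.eventually_abs_sub_le (q := q) (by linarith))
  refine ⟨δ, hδ, fun x hx h0 => ?_⟩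
  have hcontr : ∀ k, |x k - p| ≤ q ^ k * |x 0 - p| := by
    intro k
    induction k with
    | zero => simp
    | succ k ih =>
      have hk : x k ∈ Metric.ball p δ := by
        rw [Metric.mem_ball, Real.dist_eq]
        exact (ih.trans (mul_le_of_le_one_left (abs_nonneg _) (pow_le_one₀ hq0 hq1.le))).trans_lt h0
      calc |x (k + 1) - p| = |f (x k) - f p| := by rw [hx, hfp]
        _ ≤ q * |x k - p| := hball _ hk
        _ ≤ q * (q ^ k * |x 0 - p|) := by gcongr
        _ = q ^ (k + 1) * |x 0 - p| := by ring
  rw [tendsto_iff_norm_sub_tendsto_zero]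
  refine squeeze_zero (fun k => norm_nonneg _) hcontr ?_
  simpa using (tendsto_pow_atTop_nhds_zero_of_lt_one hq0 hq1).mul_const |x 0 - p|

lemma monotone_or_antitone_of_orbit {g : ℝ → ℝ} (hg : Monotone g) {y : ℕ → ℝ}
    (hy : ∀ k, y (k + 1) = g (y k)) : Monotone y ∨ Antitone y := by
  rcases le_total (y 0) (y 1) with h | h
  · refine .inl (monotone_nat_of_le_succ fun k => ?_)
    induction k with
    | zero => exact h
    | succ k ih => simpa only [hy] using hg ih
  · refine .inr (antitone_nat_of_succ_le fun k => ?_)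
    induction k with
    | zero => exact h
    | succ k ih => simpa only [hy] using hg ih

lemma not_tendsto_of_eventually_lt_abs_sub {g : ℝ → ℝ}
    (hrep : ∀ᶠ y in 𝓝[≠] p, |y - p| < |g y - p|) {y : ℕ → ℝ} (hy : ∀ k, y (k + 1) = g (y k))
    (hmono : Monotone y ∨ Antitone y) (hne : ∀ k, y k ≠ p) : ¬ Tendsto y atTop (𝓝 p) := by
  intro hlim
  obtain ⟨k, hk⟩ := ((tendsto_nhdsWithin_of_tendsto_nhds_of_eventually_within _ hlim
    (.of_forall hne)).eventually hrep).exists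
  rw [← hy] at hk
  rcases hmono with h | h
  · have := h.ge_of_tendsto hlim (k + 1)
    have := h k.le_succ
    rw [abs_of_nonpos (by linarith), abs_of_nonpos (by linarith)] at hk
    linarith
  · have := h.le_of_tendsto hlim (k + 1)
    have := h k.le_succ
    rw [abs_of_nonneg (by linarith), abs_of_nonneg (by linarith)] at hk
    linarith

/-- `f ∘ f` has derivative `d² > 1` at `p`, so `p` repels the even-indexed subsequence. -/
lemma exists_two_cycle_of_deriv_lt_neg_one (hf : Continuous f) (hanti : StrictAnti f)
    (hfp : f p = p) (hd : HasDerivAt f d p) (hd1 : d < -1) {x : ℕ → ℝ}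
    (hx : ∀ k, x (k + 1) = f (x k)) (hx0 : x 0 ≠ p) (hA : BddAbove (range x))
    (hB : BddBelow (range x)) :
    ∃ z, z ≠ f z ∧ min z (f z) < p ∧ p < max z (f z) ∧ f (f z) = z ∧
      Tendsto (fun k => x (2 * k)) atTop (𝓝 z) ∧
      Tendsto (fun k => x (2 * k + 1)) atTop (𝓝 (f z)) := by
  set y := fun k => x (2 * k)
  have hy : ∀ k, y (k + 1) = f (f (y k)) := fun k => by
    simp only [y, mul_add, mul_one, hx]
  have hne : ∀ k, x k ≠ p := fun k => by
    induction k with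
    | zero => exact hx0
    | succ k ih => exact fun h => ih (hanti.injective (by rw [← hx, h, hfp]))
  have hmono := monotone_or_antitone_of_orbit (hanti.antitone.comp hanti.antitone) hy
  have hrange : range y ⊆ range x := range_comp_subset_range _ x
  obtain ⟨z, hz⟩ : ∃ z, Tendsto y atTop (𝓝 z) := hmono.elim
    (fun h => ⟨_, tendsto_atTop_ciSup h (hA.mono hrange)⟩)
    (fun h => ⟨_, tendsto_atTop_ciInf h (hB.mono hrange)⟩)
  have hfix : f (f z) = z := tendsto_nhds_unique ((hf.comp hf).continuousAt.tendsto.comp hz)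
    ((hz.comp (tendsto_add_atTop_nat 1)).congr hy)
  have hzp : z ≠ p := by
    rintro rfl
    have hrep : ∀ᶠ y in 𝓝[≠] z, |y - z| < |f (f y) - z| := by
      have hdd := ((hfp.symm ▸ hd : HasDerivAt f d (f z)).comp z hd).eventually_lt_abs_sub
        (q := 1) (by rw [abs_mul]; nlinarith [abs_of_neg (by linarith : d < 0)])
      simpa only [Function.comp, hfp, one_mul] using hdd
    exact not_tendsto_of_eventually_lt_abs_sub hrep hy hmono (fun k => hne _) hz
  have hodd : Tendsto (fun k => x (2 * k + 1)) atTop (𝓝 (f z)) :=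
    (hf.continuousAt.tendsto.comp hz).congr fun k => (hx (2 * k)).symm
  rcases hzp.lt_or_gt with h | h
  · have h' : p < f z := hfp ▸ hanti h
    exact ⟨z, by linarith, (min_le_left _ _).trans_lt h, h'.trans_le (le_max_right _ _), hfix,
      hz, hodd⟩
  · have h' : f z < p := hfp ▸ hanti h
    exact ⟨z, by linarith, (min_le_right _ _).trans_lt h', h.trans_le (le_max_left _ _), hfix,
      hz, hodd⟩

lemma bddAbove_range_and_bddBelow_range_of_antitone (hf : Antitone f) (hf0 : ∀ y, 0 ≤ f y)
    {x : ℕ → ℝ} (hx : ∀ k, x (k + 1) = f (x k)) (h0 : 0 ≤ x 0) :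
    BddAbove (range x) ∧ BddBelow (range x) := by
  have hnonneg : ∀ k, 0 ≤ x k := fun k => by
    cases k with
    | zero => exact h0
    | succ k => exact hx k ▸ hf0 _
  refine ⟨⟨max (x 0) (f 0), ?_⟩, ⟨0, ?_⟩⟩ <;> rintro _ ⟨k, rfl⟩
  · cases k with
    | zero => exact le_max_left _ _
    | succ k => exact hx k ▸ (hf (hnonneg k)).trans (le_max_right _ _)
  · exact hnonneg k

end Dynamics

section FiringMap

variable {V_R V_F : ℝ}

lemma one_div_Ifun_pos (hV : V_R < V_F) (b N : ℝ) : 0 < 1 / Ifun V_R V_F b N := by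
  rw [Ifun_eq_millsIntegral hV]
  exact one_div_pos.2 (millsIntegral_pos hV _)

lemma continuous_one_div_Ifun (hV : V_R < V_F) (b : ℝ) :
    Continuous fun N => 1 / Ifun V_R V_F b N := by
  simp only [Ifun_eq_millsIntegral hV]
  exact continuous_const.div (continuous_millsIntegral.comp (continuous_const_mul b))
    fun N => (millsIntegral_pos hV _).ne'

lemma strictAnti_one_div_Ifun (hV : V_R < V_F) {b : ℝ} (hb : b < 0) :
    StrictAnti fun N => 1 / Ifun V_R V_F b N := fun N N' h => by
  simp only [Ifun_eq_millsIntegral hV]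
  exact one_div_lt_one_div_of_lt (millsIntegral_pos hV _)
    (millsIntegral_strictAnti hV (mul_lt_mul_of_neg_left h hb))

lemma one_div_Ifun_eq_self {b N : ℝ} (hN : N * Ifun V_R V_F b N = 1) :
    1 / Ifun V_R V_F b N = N :=
  (eq_one_div_of_mul_eq_one_left hN).symm

lemma hasDerivAt_one_div_Ifun (hV : V_R < V_F) {b N : ℝ} (hN : N * Ifun V_R V_F b N = 1) :
    HasDerivAt (fun N => 1 / Ifun V_R V_F b N)
      (-N * bifurcationFun V_R V_F (b * N) - 1) N := by
  rw [Ifun_eq_millsIntegral hV] at hN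
  simp only [Ifun_eq_millsIntegral hV, one_div]
  have hF := millsIntegral_pos hV (b * N)
  refine (((hasDerivAt_millsIntegral (b * N)).comp N
    ((hasDerivAt_id N).const_mul b)).inv hF.ne').congr_deriv ?_
  rw [bifurcationFun, Function.comp_apply]
  set F := millsIntegral V_R V_F (b * N)
  set F' := mills (V_R - b * N) - mills (V_F - b * N)
  field_simp
  linear_combination (b * F' * (N * F + 1) - F ^ 2) * hN

lemma mul_mul_millsIntegral_eq (hV : V_R < V_F) {b N : ℝ} (hN : N * Ifun V_R V_F b N = 1) :
    b * N * millsIntegral V_R V_F (b * N) = b := by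
  rw [Ifun_eq_millsIntegral hV] at hN
  rw [mul_assoc, hN, mul_one]

lemma neg_mul_bifurcationFun_sub_one_neg (hV : V_R < V_F) {b N : ℝ} (hb : b < 0) (hN₀ : 0 < N)
    (hN : N * Ifun V_R V_F b N = 1) : -N * bifurcationFun V_R V_F (b * N) - 1 < 0 := by
  have := neg_millsIntegral_lt_bifurcationFun hV (mul_neg_of_neg_of_pos hb hN₀)
  rw [Ifun_eq_millsIntegral hV] at hN
  nlinarith

end FiringMap

/-- Step 2 of Theorem 2.5: there is a bifurcation value `b* < 0` such that for
`b* < b < 0` the slope of `f_b = 1/I(b,·)` at the unique fixed point `N_b*` lies in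
`(−1, 0)` and `N_b*` is locally asymptotically stable for the recurrence, while for
`b < b*` the slope is `< −1` and every firing rate sequence not starting at `N_b*`
approaches a 2-cycle `{N⁻, N⁺}` surrounding `N_b*`. -/
theorem exists_bifurcation_value (V_R V_F : ℝ) (hV : V_R < V_F)
    (Nstar : ℝ → ℝ)
    (hNstar : ∀ b : ℝ, b < 0 →
      0 < Nstar b ∧ Nstar b * Ifun V_R V_F b (Nstar b) = 1 ∧
      ∀ N : ℝ, 0 < N → N * Ifun V_R V_F b N = 1 → N = Nstar b) :
    ∃ bstar : ℝ, bstar < 0 ∧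
      (∀ b : ℝ, bstar < b → b < 0 →
        (-1 < deriv (fun N => 1 / Ifun V_R V_F b N) (Nstar b) ∧
          deriv (fun N => 1 / Ifun V_R V_F b N) (Nstar b) < 0) ∧
        ∃ δ : ℝ, 0 < δ ∧ ∀ Nseq : ℕ → ℝ,
          (∀ k : ℕ, Nseq (k + 1) = 1 / Ifun V_R V_F b (Nseq k)) →
          |Nseq 0 - Nstar b| < δ →
          Tendsto Nseq atTop (nhds (Nstar b))) ∧
      (∀ b : ℝ, b < bstar →
        deriv (fun N => 1 / Ifun V_R V_F b N) (Nstar b) < -1 ∧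
        ∀ Nseq : ℕ → ℝ, 0 ≤ Nseq 0 → Nseq 0 ≠ Nstar b →
          (∀ k : ℕ, Nseq (k + 1) = 1 / Ifun V_R V_F b (Nseq k)) →
          ∃ Nminus Nplus : ℝ, Nminus ≠ Nplus ∧
            min Nminus Nplus < Nstar b ∧ Nstar b < max Nminus Nplus ∧
            1 / Ifun V_R V_F b Nminus = Nplus ∧
            1 / Ifun V_R V_F b Nplus = Nminus ∧
            ((Tendsto (fun k => Nseq (2 * k)) atTop (nhds Nminus) ∧
                Tendsto (fun k => Nseq (2 * k + 1)) atTop (nhds Nplus)) ∨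
              (Tendsto (fun k => Nseq (2 * k)) atTop (nhds Nplus) ∧
                Tendsto (fun k => Nseq (2 * k + 1)) atTop (nhds Nminus)))) := by
  obtain ⟨m₀, hm₀, hD₀⟩ := exists_bifurcationFun_eq_zero hV
  have hbstar : m₀ * millsIntegral V_R V_F m₀ < 0 :=
    mul_neg_of_neg_of_pos hm₀ (millsIntegral_pos hV m₀)
  refine ⟨_, hbstar, fun b hb hb₀ => ?_, fun b hb => ?_⟩
  · obtain ⟨hN₀, hN, -⟩ := hNstar b hb₀
    have hm : b * Nstar b ≤ 0 := (mul_neg_of_neg_of_pos hb₀ hN₀).le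
    have hD := (bifurcationFun_neg_iff hV hm₀.le hD₀ hm).2 (by rwa [mul_mul_millsIntegral_eq hV hN])
    have hderiv := hasDerivAt_one_div_Ifun hV hN
    have hslope := neg_mul_bifurcationFun_sub_one_neg hV hb₀ hN₀ hN
    have hslope' : -1 < -Nstar b * bifurcationFun V_R V_F (b * Nstar b) - 1 := by nlinarith
    exact ⟨hderiv.deriv ▸ ⟨hslope', hslope⟩, exists_tendsto_of_abs_deriv_lt_one
      (one_div_Ifun_eq_self hN) hderiv (abs_lt.2 ⟨hslope', by linarith⟩)⟩
  · have hb₀ : b < 0 := hb.trans hbstar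
    obtain ⟨hN₀, hN, -⟩ := hNstar b hb₀
    have hm : b * Nstar b ≤ 0 := (mul_neg_of_neg_of_pos hb₀ hN₀).le
    have hD := (bifurcationFun_pos_iff hV hm₀.le hD₀ hm).2 (by rwa [mul_mul_millsIntegral_eq hV hN])
    have hderiv := hasDerivAt_one_div_Ifun hV hN
    have hslope : -Nstar b * bifurcationFun V_R V_F (b * Nstar b) - 1 < -1 := by nlinarith
    refine ⟨hderiv.deriv ▸ hslope, fun x hx₀ hxN hx => ?_⟩
    have hanti := strictAnti_one_div_Ifun hV hb₀
    obtain ⟨hA, hB⟩ := bddAbove_range_and_bddBelow_range_of_antitone hanti.antitone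
      (fun N => (one_div_Ifun_pos hV b N).le) hx hx₀
    obtain ⟨z, hz, hmin, hmax, hfz, heven, hodd⟩ := exists_two_cycle_of_deriv_lt_neg_one
      (continuous_one_div_Ifun hV b) hanti (one_div_Ifun_eq_self hN) hderiv hslope hx hxN hA hB
    exact ⟨z, _, hz, hmin, hmax, rfl, hfz, .inl ⟨heven, hodd⟩⟩
end

section
/- For every N > 0 the partial derivative of I with respect to b satisfies ∂_b I(b,N) = −N ∫_0^∞ e^{−s²/2} e^{−sbN} (e^{s V_F} − e^{s V_R}) ds < 0; in particular, for each fixed N > 0 the map b ↦ I(b,N) is strictly decreasing and b ↦ 1/I(b,N) is strictly increasing. -/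
open MeasureTheory Real Filter

/-!
Fubini over the region `{v < w}` followed by the substitution `v = w - s` turns `I(b,N)` into
`∫_{V_R}^{V_F} G(w - bN) dw`, where `G = halfGaussMGF`. Differentiating the moving
limits gives `∂_b I = -N (G(V_F - bN) - G(V_R - bN))`, which is the stated integral, and it is
negative because `G` is strictly increasing; `G > 0` gives `I > 0`.
-/

open Set

theorem setIntegral_pos_of_forall_pos {X : Type*} [MeasurableSpace X] {μ : Measure X}
    {f : X → ℝ} {s : Set X} (hs : MeasurableSet s) (hμs : μ s ≠ 0)
    (hf : IntegrableOn f s μ) (hpos : ∀ x ∈ s, 0 < f x) : 0 < ∫ x in s, f x ∂μ := by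
  have hsupp : Function.support f ∩ s = s := inter_eq_right.2 fun x hx => (hpos x hx).ne'
  rw [setIntegral_pos_iff_support_of_nonneg_ae
    (ae_restrict_of_forall_mem hs fun x hx => (hpos x hx).le) hf, hsupp]
  exact pos_iff_ne_zero.2 hμs

theorem integral_mul_setIntegral_Ioi_eq_integral_mul_setIntegral_Iio {μ ν : Measure ℝ}
    [SFinite μ] [SFinite ν] {f g : ℝ → ℝ} (hf : Integrable f μ) (hg : Integrable g ν) :
    ∫ v, f v * ∫ w in Ioi v, g w ∂ν ∂μ = ∫ w, g w * ∫ v in Iio w, f v ∂μ ∂ν := by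
  set F : ℝ × ℝ → ℝ := {p | p.1 < p.2}.indicator fun p => f p.1 * g p.2
  have hF : Integrable F (μ.prod ν) :=
    (hf.mul_prod hg).indicator (measurableSet_lt measurable_fst measurable_snd)
  have hv : ∀ v, ∫ w, F (v, w) ∂ν = f v * ∫ w in Ioi v, g w ∂ν := fun v => by
    rw [← integral_const_mul, ← integral_indicator measurableSet_Ioi]
    rfl
  have hw : ∀ w, ∫ v, F (v, w) ∂μ = g w * ∫ v in Iio w, f v ∂μ := fun w => by
    rw [← integral_const_mul, ← integral_indicator measurableSet_Iio]
    congr 1 with v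
    by_cases h : v < w <;> simp [F, h, mul_comm]
  simp_rw [← hv, ← hw]
  exact integral_integral_swap hF

theorem integral_Iio_eq_integral_Ioi_comp_sub {E : Type*} [NormedAddCommGroup E]
    [NormedSpace ℝ E] (f : ℝ → E) (w : ℝ) :
    ∫ v in Iio w, f v = ∫ s in Ioi 0, f (w - s) := by
  have hpre : (fun s : ℝ => w - s) ⁻¹' Iio w = Ioi 0 := by ext s; simp
  rw [← hpre, (Measure.measurePreserving_sub_left volume w).setIntegral_preimage_emb
    (Homeomorph.subLeft w).measurableEmbedding]

theorem hasDerivAt_intervalIntegral_comp_sub {f : ℝ → ℝ} (hf : Continuous f) (a b c : ℝ) :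
    HasDerivAt (fun c => ∫ w in a..b, f (w - c)) (f (a - c) - f (b - c)) c := by
  have hprim : ∀ y, HasDerivAt (fun y => ∫ x in a..y, f x) (f y) y := fun y =>
    (hf.integral_hasStrictDerivAt a y).hasDerivAt
  have hsplit : (fun c => ∫ w in a..b, f (w - c)) =
      fun c => (∫ x in a..b - c, f x) - ∫ x in a..a - c, f x := by
    ext c
    rw [intervalIntegral.integral_interval_sub_left (hf.intervalIntegrable _ _)
      (hf.intervalIntegrable _ _), intervalIntegral.integral_comp_sub_right]
  rw [hsplit]
  exact (((hprim _).comp c ((hasDerivAt_id' c).const_sub b)).sub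
    ((hprim _).comp c ((hasDerivAt_id' c).const_sub a))).congr_deriv (by ring)

theorem integrable_exp_neg_sub_sq_div_two (c : ℝ) :
    Integrable fun v : ℝ => exp (-(v - c) ^ 2 / 2) := by
  refine ((integrable_exp_neg_mul_sq one_half_pos).comp_sub_right c).congr
    (ae_of_all _ fun v => ?_)
  simp only
  ring_nf

theorem integrable_exp_neg_sq_div_two_add_mul (a : ℝ) :
    Integrable fun s : ℝ => exp (-s ^ 2 / 2 + s * a) := by
  refine ((integrable_exp_neg_sub_sq_div_two a).const_mul (exp (a ^ 2 / 2))).congr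
    (ae_of_all _ fun s => ?_)
  simp only [← exp_add]
  ring_nf

noncomputable def halfGaussMGF (x : ℝ) : ℝ :=
  ∫ s in Ioi (0 : ℝ), exp (-s ^ 2 / 2 + s * x)

theorem continuous_halfGaussMGF : Continuous halfGaussMGF := by
  refine continuous_iff_continuousAt.2 fun x₀ => continuousAt_of_dominated
    (bound := fun s => exp (-s ^ 2 / 2 + s * (x₀ + 1)))
    (Eventually.of_forall fun x => (by fun_prop : Continuous _).aestronglyMeasurable) ?_
    (integrable_exp_neg_sq_div_two_add_mul _).integrableOn
    (ae_of_all _ fun s => by fun_prop)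
  filter_upwards [Iio_mem_nhds (lt_add_one x₀)] with x hx
  filter_upwards [ae_restrict_mem measurableSet_Ioi] with s hs
  rw [norm_of_nonneg (exp_pos _).le, exp_le_exp]
  have : s * x ≤ s * (x₀ + 1) := mul_le_mul_of_nonneg_left (mem_Iio.1 hx).le (mem_Ioi.1 hs).le
  linarith

theorem halfGaussMGF_pos (x : ℝ) : 0 < halfGaussMGF x :=
  setIntegral_pos_of_forall_pos measurableSet_Ioi (by simp)
    (integrable_exp_neg_sq_div_two_add_mul x).integrableOn fun _ _ => exp_pos _

theorem strictMono_halfGaussMGF : StrictMono halfGaussMGF := by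
  intro x y hxy
  have hx := (integrable_exp_neg_sq_div_two_add_mul x).integrableOn (s := Ioi 0)
  have hy := (integrable_exp_neg_sq_div_two_add_mul y).integrableOn (s := Ioi 0)
  rw [← sub_pos, halfGaussMGF, halfGaussMGF, ← integral_sub hy hx]
  refine setIntegral_pos_of_forall_pos measurableSet_Ioi (by simp) (hy.sub hx) fun s hs => ?_
  have : s * x < s * y := mul_lt_mul_of_pos_left hxy hs
  exact sub_pos.2 (exp_lt_exp.2 (by linarith))

theorem halfGaussMGF_sub_halfGaussMGF_eq_integral (x y c : ℝ) :
    halfGaussMGF (y - c) - halfGaussMGF (x - c) =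
      ∫ s in Ioi (0 : ℝ), exp (-s ^ 2 / 2) * exp (-(s * c)) * (exp (s * y) - exp (s * x)) := by
  rw [halfGaussMGF, halfGaussMGF, ← integral_sub
    (integrable_exp_neg_sq_div_two_add_mul _).integrableOn
    (integrable_exp_neg_sq_div_two_add_mul _).integrableOn]
  congr 1 with s
  simp only [mul_sub, ← exp_add]
  ring_nf

theorem exp_sq_mul_integral_Iio_eq_halfGaussMGF (c w : ℝ) :
    exp ((w - c) ^ 2 / 2) * ∫ v in Iio w, exp (-(v - c) ^ 2 / 2) = halfGaussMGF (w - c) := by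
  rw [integral_Iio_eq_integral_Ioi_comp_sub, ← integral_const_mul, halfGaussMGF]
  refine setIntegral_congr_fun measurableSet_Ioi fun s _ => ?_
  rw [← exp_add]
  ring_nf

theorem Ifun_eq_integral_halfGaussMGF {V_R V_F : ℝ} (hV : V_R ≤ V_F) (b N : ℝ) :
    Ifun V_R V_F b N = ∫ w in V_R..V_F, halfGaussMGF (w - b * N) := by
  set c := b * N
  set g := (Ioc V_R V_F).indicator fun w => exp ((w - c) ^ 2 / 2)
  have hg : Integrable g :=
    (Continuous.integrableOn_Ioc (by fun_prop)).integrable_indicator measurableSet_Ioc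
  have hinner : ∀ v, ∫ w in Ioi v, g w = ∫ w in Ioc (max v V_R) V_F, exp ((w - c) ^ 2 / 2) :=
    fun v => by rw [setIntegral_indicator measurableSet_Ioc, inter_comm, Ioc_inter_Ioi, max_comm]
  calc Ifun V_R V_F b N = ∫ v in Iic V_F, exp (-(v - c) ^ 2 / 2) * ∫ w in Ioi v, g w :=
        setIntegral_congr_fun measurableSet_Iic fun v hv => by
          rw [hinner, intervalIntegral.integral_of_le (max_le hv hV)]
    _ = ∫ v, exp (-(v - c) ^ 2 / 2) * ∫ w in Ioi v, g w :=
        setIntegral_eq_integral_of_forall_compl_eq_zero fun v hv => by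
          rw [hinner, Ioc_eq_empty (not_lt.2 ((not_le.1 hv).le.trans (le_max_left v V_R))),
            Measure.restrict_empty, integral_zero_measure, mul_zero]
    _ = ∫ w, g w * ∫ v in Iio w, exp (-(v - c) ^ 2 / 2) :=
        integral_mul_setIntegral_Ioi_eq_integral_mul_setIntegral_Iio
          (integrable_exp_neg_sub_sq_div_two c) hg
    _ = ∫ w in Ioc V_R V_F, halfGaussMGF (w - c) := by
        rw [← integral_indicator measurableSet_Ioc]
        congr 1 with w
        simp only [g, indicator, ← exp_sq_mul_integral_Iio_eq_halfGaussMGF c w]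
        split_ifs <;> simp
    _ = ∫ w in V_R..V_F, halfGaussMGF (w - c) := (intervalIntegral.integral_of_le hV).symm

theorem Ifun_pos {V_R V_F : ℝ} (hV : V_R < V_F) (b N : ℝ) : 0 < Ifun V_R V_F b N := by
  rw [Ifun_eq_integral_halfGaussMGF hV.le]
  exact intervalIntegral.intervalIntegral_pos_of_pos_on
    ((continuous_halfGaussMGF.comp (continuous_sub_right _)).intervalIntegrable _ _)
    (fun w _ => halfGaussMGF_pos _) hV

theorem hasDerivAt_Ifun {V_R V_F : ℝ} (hV : V_R ≤ V_F) (b N : ℝ) :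
    HasDerivAt (fun b => Ifun V_R V_F b N)
      (-N * (halfGaussMGF (V_F - b * N) - halfGaussMGF (V_R - b * N))) b := by
  simp_rw [Ifun_eq_integral_halfGaussMGF hV]
  refine ((hasDerivAt_intervalIntegral_comp_sub continuous_halfGaussMGF V_R V_F (b * N)).comp b
    (hasDerivAt_mul_const N)).congr_deriv ?_
  ring

/-- For every `N > 0`, `∂_b I(b,N) = −N ∫_0^∞ e^{−s²/2} e^{−sbN} (e^{sV_F} − e^{sV_R}) ds < 0`;
in particular `b ↦ I(b,N)` is strictly decreasing and `b ↦ 1/I(b,N)` is strictly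
increasing. -/
theorem Ifun_deriv_b_neg (V_R V_F : ℝ) (hV : V_R < V_F) (N : ℝ) (hN : 0 < N) :
    (∀ b : ℝ,
      HasDerivAt (fun b => Ifun V_R V_F b N)
        (-N * ∫ s in Set.Ioi (0 : ℝ),
          Real.exp (-s ^ 2 / 2) * Real.exp (-(s * b * N)) *
            (Real.exp (s * V_F) - Real.exp (s * V_R))) b ∧
      -N * (∫ s in Set.Ioi (0 : ℝ),
          Real.exp (-s ^ 2 / 2) * Real.exp (-(s * b * N)) *
            (Real.exp (s * V_F) - Real.exp (s * V_R))) < 0) ∧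
    StrictAnti (fun b => Ifun V_R V_F b N) ∧
    StrictMono (fun b => 1 / Ifun V_R V_F b N) := by
  have hintegral : ∀ b : ℝ, ∫ s in Ioi (0 : ℝ), exp (-s ^ 2 / 2) * exp (-(s * b * N)) *
      (exp (s * V_F) - exp (s * V_R)) = halfGaussMGF (V_F - b * N) - halfGaussMGF (V_R - b * N) :=
    fun b => by simp_rw [halfGaussMGF_sub_halfGaussMGF_eq_integral, mul_assoc]
  have hneg : ∀ b : ℝ, -N * (halfGaussMGF (V_F - b * N) - halfGaussMGF (V_R - b * N)) < 0 :=
    fun b => mul_neg_of_neg_of_pos (neg_neg_of_pos hN)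
      (sub_pos.2 (strictMono_halfGaussMGF (by linarith)))
  have hanti : StrictAnti fun b => Ifun V_R V_F b N :=
    strictAnti_of_deriv_neg fun b => (hasDerivAt_Ifun hV.le b N).deriv ▸ hneg b
  refine ⟨fun b => ?_, hanti, fun a b hab => one_div_lt_one_div_of_lt (Ifun_pos hV b N) (hanti hab)⟩
  rw [hintegral]
  exact ⟨hasDerivAt_Ifun hV.le b N, hneg b⟩
end

section
/- For b ≤ 0 let N_b* denote the unique solution of N·I(b,N) = 1. Then lim_{b → −∞} N_b* = 0. -/
open MeasureTheory Real Filter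

/-! Write `c = b * N`. For `c ≤ V_R`, restricting the outer integral to `v ∈ [V_R, V_F - 2δ]`
and the inner one to `w ∈ [V_F - δ, V_F]` gives `I(b,N) ≥ (V_F - V_R - 2δ) δ e^{δ (V_R - c)}`,
since there `(w - c)² - (v - c)² ≥ 2δ (v - c)`. If `N_b* ≥ ε` for some very negative `b`, then
`b N_b* ≤ b ε` is very negative too and `N_b* I(b, N_b*) ≥ ε δ² e^{δ (V_R - b ε)} > 1` with
`δ = (V_F - V_R) / 3`, contradicting `N_b* I(b, N_b*) = 1`. -/

open Set intervalIntegral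

lemma continuous_integral_max_left {f : ℝ → ℝ} (hf : Continuous f) (a b : ℝ) :
    Continuous fun v => ∫ w in (max v a)..b, f w := by
  simp_rw [integral_symm b]
  exact ((continuous_primitive (fun x y => hf.intervalIntegrable x y) b).comp
    (continuous_id.max continuous_const)).neg

lemma integral_max_left_le {f : ℝ → ℝ} (hf : Continuous f) (hf₀ : 0 ≤ f) {a b v : ℝ}
    (hab : a ≤ b) (hvb : v ≤ b) : ∫ w in (max v a)..b, f w ≤ ∫ w in a..b, f w :=
  integral_mono_interval (le_max_right _ _) (max_le hvb hab) le_rfl (ae_of_all _ hf₀)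
    (hf.intervalIntegrable _ _)

lemma exp_mul_le_exp_neg_sq_mul_exp_sq {c v w δ : ℝ} (hcv : c ≤ v) (hvw : v + δ ≤ w)
    (hδ : 0 ≤ δ) : exp (δ * (v - c)) ≤ exp (-(v - c) ^ 2 / 2) * exp ((w - c) ^ 2 / 2) := by
  rw [← exp_add, exp_le_exp]
  nlinarith

noncomputable def ifunIntegrand (V_R V_F c v : ℝ) : ℝ :=
  exp (-(v - c) ^ 2 / 2) * ∫ w in (max v V_R)..V_F, exp ((w - c) ^ 2 / 2)

lemma Ifun_eq_integral_ifunIntegrand (V_R V_F b N : ℝ) :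
    Ifun V_R V_F b N = ∫ v in Iic V_F, ifunIntegrand V_R V_F (b * N) v :=
  rfl

section

variable {V_R V_F : ℝ}

lemma ifunIntegrand_nonneg (hV : V_R ≤ V_F) {c v : ℝ} (hv : v ≤ V_F) :
    0 ≤ ifunIntegrand V_R V_F c v :=
  mul_nonneg (exp_pos _).le
    (integral_nonneg (μ := volume) (max_le hv hV) fun _ _ => (exp_pos _).le)

lemma integrableOn_ifunIntegrand (hV : V_R ≤ V_F) (c : ℝ) :
    IntegrableOn (ifunIntegrand V_R V_F c) (Iic V_F) := by
  have hexp : Continuous fun w => exp ((w - c) ^ 2 / 2) := by fun_prop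
  set C := ∫ w in V_R..V_F, exp ((w - c) ^ 2 / 2)
  have hgauss : Integrable fun v => C * exp (-(1 / 2) * (v - c) ^ 2) :=
    ((integrable_exp_neg_mul_sq (by norm_num)).comp_sub_right c).const_mul C
  have hcont : Continuous (ifunIntegrand V_R V_F c) :=
    (by fun_prop : Continuous fun v => exp (-(v - c) ^ 2 / 2)).mul
      (continuous_integral_max_left hexp V_R V_F)
  refine hgauss.integrableOn.mono' hcont.aestronglyMeasurable.restrict
    ((ae_restrict_iff' measurableSet_Iic).2 (ae_of_all _ fun v hv => ?_))
  rw [Real.norm_eq_abs, abs_of_nonneg (ifunIntegrand_nonneg hV (mem_Iic.1 hv)), ifunIntegrand,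
    mul_comm C, show -(1 / 2) * (v - c) ^ 2 = -(v - c) ^ 2 / 2 by ring]
  exact mul_le_mul_of_nonneg_left (integral_max_left_le hexp (fun _ => (exp_pos _).le) hV hv)
    (exp_pos _).le

lemma ifunIntegrand_ge {c v δ : ℝ} (hδ : 0 ≤ δ) (hc : c ≤ V_R) (hv : v ∈ Icc V_R (V_F - 2 * δ)) :
    δ * exp (δ * (V_R - c)) ≤ ifunIntegrand V_R V_F c v := by
  have hexp : Continuous fun w => exp (-(v - c) ^ 2 / 2) * exp ((w - c) ^ 2 / 2) := by fun_prop
  calc δ * exp (δ * (V_R - c)) = ∫ _ in (V_F - δ)..V_F, exp (δ * (V_R - c)) := by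
        rw [intervalIntegral.integral_const, smul_eq_mul, sub_sub_cancel]
    _ ≤ ∫ w in (V_F - δ)..V_F, exp (-(v - c) ^ 2 / 2) * exp ((w - c) ^ 2 / 2) := by
        refine integral_mono_on (by linarith) intervalIntegrable_const
          (hexp.intervalIntegrable _ _) fun w hw => ?_
        calc exp (δ * (V_R - c)) ≤ exp (δ * (v - c)) := by gcongr; exact hv.1
          _ ≤ _ := exp_mul_le_exp_neg_sq_mul_exp_sq (hc.trans hv.1) (by linarith [hv.2, hw.1]) hδ
    _ ≤ ∫ w in v..V_F, exp (-(v - c) ^ 2 / 2) * exp ((w - c) ^ 2 / 2) :=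
        integral_mono_interval (by linarith [hv.2]) (by linarith) le_rfl
          (ae_of_all _ fun w => by positivity) (hexp.intervalIntegrable _ _)
    _ = ifunIntegrand V_R V_F c v := by
        rw [ifunIntegrand, max_eq_left hv.1, intervalIntegral.integral_const_mul]

lemma Ifun_ge {b N δ : ℝ} (hδ : 0 ≤ δ) (h2δ : 2 * δ ≤ V_F - V_R) (hc : b * N ≤ V_R) :
    (V_F - V_R - 2 * δ) * δ * exp (δ * (V_R - b * N)) ≤ Ifun V_R V_F b N := by
  have hsub : Icc V_R (V_F - 2 * δ) ⊆ Iic V_F := fun v hv => by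
    simp only [mem_Iic]; linarith [hv.2]
  have hint := integrableOn_ifunIntegrand (by linarith : V_R ≤ V_F) (b * N)
  rw [Ifun_eq_integral_ifunIntegrand]
  calc (V_F - V_R - 2 * δ) * δ * exp (δ * (V_R - b * N))
      = δ * exp (δ * (V_R - b * N)) * volume.real (Icc V_R (V_F - 2 * δ)) := by
        rw [Real.volume_real_Icc_of_le (by linarith)]; ring
    _ ≤ ∫ v in Icc V_R (V_F - 2 * δ), ifunIntegrand V_R V_F (b * N) v :=
        setIntegral_ge_of_const_le_real measurableSet_Icc measure_Icc_lt_top.ne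
          (fun v hv => ifunIntegrand_ge hδ hc hv) (hint.mono_set hsub)
    _ ≤ ∫ v in Iic V_F, ifunIntegrand V_R V_F (b * N) v := by
        refine setIntegral_mono_set hint ?_ hsub.eventuallyLE
        exact (ae_restrict_iff' measurableSet_Iic).2
          (ae_of_all _ fun v hv => ifunIntegrand_nonneg (by linarith) hv)

lemma mul_Ifun_ge {b N ε δ : ℝ} (hδ : 0 ≤ δ) (h2δ : 2 * δ ≤ V_F - V_R) (hb : b ≤ 0)
    (hε : 0 ≤ ε) (hεN : ε ≤ N) (hbε : b * ε ≤ V_R) :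
    ε * ((V_F - V_R - 2 * δ) * δ * exp (δ * (V_R - b * ε))) ≤ N * Ifun V_R V_F b N := by
  have hbN : b * N ≤ b * ε := mul_le_mul_of_nonpos_left hεN hb
  have hN : 0 ≤ N := hε.trans hεN
  calc ε * ((V_F - V_R - 2 * δ) * δ * exp (δ * (V_R - b * ε)))
      ≤ N * ((V_F - V_R - 2 * δ) * δ * exp (δ * (V_R - b * N))) := by gcongr
    _ ≤ N * Ifun V_R V_F b N :=
        mul_le_mul_of_nonneg_left (Ifun_ge hδ h2δ (hbN.trans hbε)) hN

end

/-- For `b ≤ 0` let `N_b*` be the unique solution of `N·I(b,N) = 1`. Then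
`N_b* → 0` as `b → −∞`. -/
theorem Nstar_tendsto_zero_atBot (V_R V_F : ℝ) (hV : V_R < V_F)
    (Nstar : ℝ → ℝ)
    (hNstar : ∀ b : ℝ, b ≤ 0 →
      0 < Nstar b ∧ Nstar b * Ifun V_R V_F b (Nstar b) = 1 ∧
      ∀ N : ℝ, 0 < N → N * Ifun V_R V_F b N = 1 → N = Nstar b) :
    Tendsto Nstar atBot (nhds 0) := by
  obtain ⟨δ, hδ, h3δ⟩ : ∃ δ : ℝ, 0 < δ ∧ 3 * δ = V_F - V_R :=
    ⟨(V_F - V_R) / 3, by linarith, by ring⟩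
  refine tendsto_order.2 ⟨fun a ha => ?_, fun ε hε => ?_⟩
  · filter_upwards [eventually_le_atBot 0] with b hb using ha.trans (hNstar b hb).1
  have hbε : Tendsto (fun b => b * ε) atBot atBot := tendsto_id.atBot_mul_const hε
  have hgrow : Tendsto (fun b => ε * ((V_F - V_R - 2 * δ) * δ * exp (δ * (V_R - b * ε))))
      atBot atTop := by
    refine Tendsto.const_mul_atTop hε (Tendsto.const_mul_atTop (by nlinarith) ?_)
    exact tendsto_exp_atTop.comp (Tendsto.const_mul_atTop hδ
      (tendsto_atTop_add_const_left _ _ (tendsto_neg_atBot_atTop.comp hbε)))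
  filter_upwards [eventually_le_atBot 0, hbε.eventually_le_atBot V_R,
    hgrow.eventually_gt_atTop 1] with b hb hbεR hbig
  obtain ⟨-, hsol, -⟩ := hNstar b hb
  by_contra! hεN
  exact (hbig.trans_le (mul_Ifun_ge hδ.le (by linarith) hb hε.le hεN hbεR)).ne' hsol
end

section
/- For b ≤ 0 let N(b) denote the unique positive solution of N·I(b,N) = 1. Then the function g(b) := −∂_N I(b, N(b)) / I(b, N(b))² (which equals the derivative of N ↦ 1/I(b,N) evaluated at N(b)) is strictly increasing on (−∞, 0]: if b₁ < b₂ ≤ 0 then g(b₁) < g(b₂). -/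
/-!
Write `x = b N`. By Fubini, `I(b, N) = K(x) := ∫_{V_R - x}^{V_F - x} ψ`, where
`ψ(t) = e^{t²/2} ∫_{-∞}^t e^{-s²/2} ds`, and `N I(b, N) = 1` becomes `x K(x) = b`; hence
`g(b) = G(x(b))` with `G(x) = -x K'(x) / K(x)`. Since `ψ' = t ψ + 1 > 0`, `K` is positive and
decreasing, so `x ↦ x K(x)`, and with it `b ↦ x(b)`, is strictly increasing on `(-∞, 0]`.
`G` is strictly increasing there because `K` is log-convex: up to the factor `e^{t²/2}`,
`ψ, ψ', ψ''` are the moments of order `0, 1, 2` of `t - s` against `e^{-s²/2} ds` on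
`(-∞, t]`, so `ψ'² ≤ ψ ψ''` by Cauchy–Schwarz, and Cauchy–Schwarz again gives
`K'² = (∫ ψ')² ≤ ∫ ψ · ∫ ψ'² / ψ ≤ ∫ ψ · ∫ ψ'' = K K''`.
-/

open MeasureTheory Real Filter

open Set Topology

theorem sq_integral_le_integral_mul_integral_sq_div {α : Type*} [MeasurableSpace α]
    {μ : Measure α} {f g : α → ℝ} (hf : ∀ x, 0 < f x) (hfi : Integrable f μ)
    (hgi : Integrable g μ) (hqi : Integrable (fun x => g x ^ 2 / f x) μ) :
    (∫ x, g x ∂μ) ^ 2 ≤ (∫ x, f x ∂μ) * ∫ x, g x ^ 2 / f x ∂μ := by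
  have hquad : ∀ r : ℝ, 0 ≤ (∫ x, f x ∂μ) * (r * r) + (-2 * ∫ x, g x ∂μ) * r +
      ∫ x, g x ^ 2 / f x ∂μ := by
    intro r
    have hexpand : ∀ x,
        (g x - r * f x) ^ 2 / f x = r ^ 2 * f x - 2 * r * g x + g x ^ 2 / f x := fun x => by
      field_simp [(hf x).ne']
      ring
    calc 0 ≤ ∫ x, (g x - r * f x) ^ 2 / f x ∂μ :=
          integral_nonneg fun x => div_nonneg (sq_nonneg _) (hf x).le
      _ = _ := by
        simp_rw [hexpand]
        rw [integral_add (by fun_prop) hqi, integral_sub (by fun_prop) (by fun_prop),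
          integral_const_mul, integral_const_mul]
        ring
  have := discrim_le_zero hquad
  rw [discrim] at this
  linarith

theorem StrictMonoOn.strictMonoOn_of_leftInvOn {α β : Type*} [Preorder α] [LinearOrder β]
    {φ : β → α} {x : α → β} {s : Set α} {t : Set β} (hφ : StrictMonoOn φ t)
    (hx : MapsTo x s t) (hinv : LeftInvOn φ x s) : StrictMonoOn x s :=
  fun _ h₁ _ h₂ hlt => (hφ.lt_iff_lt (hx h₁) (hx h₂)).1 (by rwa [hinv h₁, hinv h₂])

theorem strictMonoOn_id_mul {f : ℝ → ℝ} (hf : Differentiable ℝ f) (hpos : ∀ x, 0 < f x)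
    (hanti : ∀ x, deriv f x ≤ 0) : StrictMonoOn (fun x => x * f x) (Iic 0) := by
  have hderiv : ∀ x, HasDerivAt (fun x => x * f x) (1 * f x + x * deriv f x) x :=
    fun x => (hasDerivAt_id x).mul (hf x).hasDerivAt
  refine strictMonoOn_of_deriv_pos (convex_Iic 0)
    (fun x _ => (hderiv x).continuousAt.continuousWithinAt) fun x hx => ?_
  rw [interior_Iic, mem_Iio] at hx
  rw [(hderiv x).deriv]
  nlinarith [hpos x, hanti x]

theorem strictMonoOn_neg_mul_deriv_div {f : ℝ → ℝ} (hf : Differentiable ℝ f)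
    (hf' : Differentiable ℝ (deriv f)) (hpos : ∀ x, 0 < f x) (hneg : ∀ x, deriv f x < 0)
    (hlogconv : ∀ x, deriv f x ^ 2 ≤ f x * deriv (deriv f) x) :
    StrictMonoOn (fun x => -x * deriv f x / f x) (Iic 0) := by
  have hderiv : ∀ x, HasDerivAt (fun x => -x * deriv f x / f x)
      (((-1 * deriv f x + -x * deriv (deriv f) x) * f x - -x * deriv f x * deriv f x) /
        f x ^ 2) x :=
    fun x => ((hasDerivAt_id x).neg.mul (hf' x).hasDerivAt).div (hf x).hasDerivAt (hpos x).ne'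
  refine strictMonoOn_of_deriv_pos (convex_Iic 0)
    (fun x _ => (hderiv x).continuousAt.continuousWithinAt) fun x hx => ?_
  rw [interior_Iic, mem_Iio] at hx
  rw [(hderiv x).deriv]
  have hconv := mul_nonneg (neg_nonneg.2 hx.le) (sub_nonneg.2 (hlogconv x))
  have hdecr := mul_pos (neg_pos.2 (hneg x)) (hpos x)
  exact div_pos (by nlinarith) (pow_pos (hpos x) 2)

noncomputable def Phi (t : ℝ) : ℝ := ∫ s in Iic t, exp (-s ^ 2 / 2)

noncomputable def psi (t : ℝ) : ℝ := exp (t ^ 2 / 2) * Phi t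

theorem integrable_pow_mul_exp_neg_sq_div_two (k : ℕ) :
    Integrable fun s : ℝ => s ^ k * exp (-s ^ 2 / 2) := by
  have := integrable_rpow_mul_exp_neg_mul_sq (b := 1 / 2) (by norm_num) (s := k)
    (by linarith [k.cast_nonneg (α := ℝ)])
  simp_rw [rpow_natCast] at this
  convert this using 4 with s
  ring

theorem integrable_exp_neg_sq_div_two : Integrable fun s : ℝ => exp (-s ^ 2 / 2) := by
  simpa using integrable_pow_mul_exp_neg_sq_div_two 0

theorem integrable_eval_mul_exp_neg_sq_div_two (p : Polynomial ℝ) :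
    Integrable fun s : ℝ => p.eval s * exp (-s ^ 2 / 2) := by
  induction p using Polynomial.induction_on' with
  | add p q hp hq =>
    simp only [Polynomial.eval_add, add_mul]
    exact hp.add hq
  | monomial n a => simpa [mul_assoc] using (integrable_pow_mul_exp_neg_sq_div_two n).const_mul a

theorem integrable_sub_pow_mul_exp_neg_sq_div_two (t : ℝ) (k : ℕ) :
    Integrable fun s : ℝ => (t - s) ^ k * exp (-s ^ 2 / 2) := by
  have := integrable_eval_mul_exp_neg_sq_div_two ((Polynomial.C t - Polynomial.X) ^ k)
  simp only [Polynomial.eval_pow, Polynomial.eval_sub, Polynomial.eval_C, Polynomial.eval_X] at this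
  exact this

theorem integrable_sub_mul_exp_neg_sq_div_two (t : ℝ) :
    Integrable fun s : ℝ => (t - s) * exp (-s ^ 2 / 2) := by
  simpa using integrable_sub_pow_mul_exp_neg_sq_div_two t 1

theorem hasDerivAt_exp_neg_sq_div_two (s : ℝ) :
    HasDerivAt (fun s => exp (-s ^ 2 / 2)) (-s * exp (-s ^ 2 / 2)) s := by
  have := ((hasDerivAt_pow 2 s).fun_neg.div_const 2).exp
  convert this using 1
  simp only [Nat.cast_ofNat]
  ring

theorem tendsto_exp_neg_sq_div_two_atBot :
    Tendsto (fun s : ℝ => exp (-s ^ 2 / 2)) atBot (𝓝 0) :=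
  tendsto_zero_of_hasDerivAt_of_integrableOn_Iic (a := 0)
    (fun s _ => hasDerivAt_exp_neg_sq_div_two s)
    ((integrable_pow_mul_exp_neg_sq_div_two 1).neg.integrableOn.congr_fun
      (fun s _ => by simp) measurableSet_Iic)
    integrable_exp_neg_sq_div_two.integrableOn

theorem tendsto_mul_exp_neg_sq_div_two_atBot :
    Tendsto (fun s : ℝ => s * exp (-s ^ 2 / 2)) atBot (𝓝 0) :=
  tendsto_zero_of_hasDerivAt_of_integrableOn_Iic (a := 0)
    (fun s _ => ((hasDerivAt_id s).mul (hasDerivAt_exp_neg_sq_div_two s)))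
    ((integrable_exp_neg_sq_div_two.sub
      (integrable_pow_mul_exp_neg_sq_div_two 2)).integrableOn.congr_fun
        (fun s _ => by simp; ring) measurableSet_Iic)
    (by simpa using (integrable_pow_mul_exp_neg_sq_div_two 1).integrableOn)

theorem hasDerivAt_Phi (t : ℝ) : HasDerivAt Phi (exp (-t ^ 2 / 2)) t := by
  have hPhi : ∀ u, Phi u = Phi 0 + ∫ s in (0 : ℝ)..u, exp (-s ^ 2 / 2) := fun u => by
    rw [← intervalIntegral.integral_Iic_sub_Iic integrable_exp_neg_sq_div_two.integrableOn
      integrable_exp_neg_sq_div_two.integrableOn, Phi, Phi, add_sub_cancel]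
  rw [funext hPhi]
  exact (intervalIntegral.integral_hasDerivAt_right
    ((by fun_prop : Continuous fun s : ℝ => exp (-s ^ 2 / 2)).intervalIntegrable _ _)
    (Continuous.stronglyMeasurableAtFilter (by fun_prop) _ _) (by fun_prop)).const_add _

theorem tendsto_Phi_atBot : Tendsto Phi atBot (𝓝 0) :=
  tendsto_integral_Iic_zero tendsto_id

theorem integral_Iic_sub_mul_exp_neg_sq_div_two (t : ℝ) :
    ∫ s in Iic t, (t - s) * exp (-s ^ 2 / 2) = t * Phi t + exp (-t ^ 2 / 2) := by
  have := integral_Iic_of_hasDerivAt_of_tendsto' (a := t) (m := 0)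
    (f := fun s => t * Phi s + exp (-s ^ 2 / 2)) (f' := fun s => (t - s) * exp (-s ^ 2 / 2))
    (fun s _ => (((hasDerivAt_Phi s).const_mul t).add (hasDerivAt_exp_neg_sq_div_two s)).congr_deriv
      (by ring))
    (integrable_sub_mul_exp_neg_sq_div_two t).integrableOn
    (by simpa using (tendsto_Phi_atBot.const_mul t).add tendsto_exp_neg_sq_div_two_atBot)
  simpa using this

theorem integral_Iic_sub_sq_mul_exp_neg_sq_div_two (t : ℝ) :
    ∫ s in Iic t, (t - s) ^ 2 * exp (-s ^ 2 / 2) =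
      (1 + t ^ 2) * Phi t + t * exp (-t ^ 2 / 2) := by
  have := integral_Iic_of_hasDerivAt_of_tendsto' (a := t) (m := 0)
    (f := fun s => (1 + t ^ 2) * Phi s + 2 * t * exp (-s ^ 2 / 2) - s * exp (-s ^ 2 / 2))
    (f' := fun s => (t - s) ^ 2 * exp (-s ^ 2 / 2))
    (fun s _ => ((((hasDerivAt_Phi s).const_mul _).add
      ((hasDerivAt_exp_neg_sq_div_two s).const_mul _)).sub
      ((hasDerivAt_id s).mul (hasDerivAt_exp_neg_sq_div_two s))).congr_deriv (by simp; ring))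
    (integrable_sub_pow_mul_exp_neg_sq_div_two t 2).integrableOn
    (by simpa using (((tendsto_Phi_atBot.const_mul _).add
      (tendsto_exp_neg_sq_div_two_atBot.const_mul _)).sub tendsto_mul_exp_neg_sq_div_two_atBot))
  rw [this]
  ring

theorem mul_Phi_add_exp_pos (t : ℝ) : 0 < t * Phi t + exp (-t ^ 2 / 2) := by
  rw [← integral_Iic_sub_mul_exp_neg_sq_div_two, setIntegral_pos_iff_support_of_nonneg_ae
    (ae_restrict_of_forall_mem measurableSet_Iic fun s hs =>
      mul_nonneg (sub_nonneg.2 hs) (exp_pos _).le)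
    (integrable_sub_mul_exp_neg_sq_div_two t).integrableOn]
  refine lt_of_lt_of_le (by simp : (0 : ENNReal) < volume (Iio t)) (measure_mono fun s hs => ?_)
  exact ⟨(mul_pos (sub_pos.2 hs) (exp_pos _)).ne', (le_of_lt hs : s ≤ t)⟩

theorem sq_mul_Phi_add_exp_le (t : ℝ) :
    (t * Phi t + exp (-t ^ 2 / 2)) ^ 2 ≤
      Phi t * ((1 + t ^ 2) * Phi t + t * exp (-t ^ 2 / 2)) := by
  have hq : ∀ s : ℝ, ((t - s) * exp (-s ^ 2 / 2)) ^ 2 / exp (-s ^ 2 / 2) =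
      (t - s) ^ 2 * exp (-s ^ 2 / 2) := fun s => by
    field_simp
  have := sq_integral_le_integral_mul_integral_sq_div (μ := volume.restrict (Iic t))
    (fun s => exp_pos (-s ^ 2 / 2)) integrable_exp_neg_sq_div_two.integrableOn
    (integrable_sub_mul_exp_neg_sq_div_two t).integrableOn
    (by simp_rw [hq]; exact (integrable_sub_pow_mul_exp_neg_sq_div_two t 2).restrict)
  simp_rw [hq] at this
  rwa [integral_Iic_sub_mul_exp_neg_sq_div_two, integral_Iic_sub_sq_mul_exp_neg_sq_div_two] at this

theorem exp_sq_div_two_mul_exp_neg (t : ℝ) : exp (t ^ 2 / 2) * exp (-t ^ 2 / 2) = 1 := by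
  rw [← exp_add, neg_div, add_neg_cancel, exp_zero]

theorem Phi_pos (t : ℝ) : 0 < Phi t := by
  have : NeZero (volume.restrict (Iic t)) := ⟨by simp⟩
  exact integral_exp_pos integrable_exp_neg_sq_div_two.integrableOn

theorem psi_pos (t : ℝ) : 0 < psi t :=
  mul_pos (exp_pos _) (Phi_pos t)

theorem hasDerivAt_psi (t : ℝ) : HasDerivAt psi (t * psi t + 1) t := by
  refine (((hasDerivAt_pow 2 t).div_const 2).exp.mul (hasDerivAt_Phi t)).congr_deriv ?_
  rw [exp_sq_div_two_mul_exp_neg, psi]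
  push_cast
  ring

@[fun_prop]
theorem continuous_psi : Continuous psi :=
  continuous_iff_continuousAt.2 fun t => (hasDerivAt_psi t).continuousAt

theorem mul_psi_add_one_pos (t : ℝ) : 0 < t * psi t + 1 := by
  have h : t * psi t + 1 = exp (t ^ 2 / 2) * (t * Phi t + exp (-t ^ 2 / 2)) := by
    rw [psi, mul_add, exp_sq_div_two_mul_exp_neg]
    ring
  rw [h]
  exact mul_pos (exp_pos _) (mul_Phi_add_exp_pos t)

theorem strictMono_psi : StrictMono psi :=
  strictMono_of_deriv_pos fun t => (hasDerivAt_psi t).deriv ▸ mul_psi_add_one_pos t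

theorem hasDerivAt_mul_psi_add_one (t : ℝ) :
    HasDerivAt (fun t => t * psi t + 1) (psi t + t * (t * psi t + 1)) t :=
  (((hasDerivAt_id t).mul (hasDerivAt_psi t)).add_const 1).congr_deriv (by simp)

theorem sq_mul_psi_add_one_le (t : ℝ) :
    (t * psi t + 1) ^ 2 ≤ psi t * (psi t + t * (t * psi t + 1)) := by
  have hE := exp_sq_div_two_mul_exp_neg t
  calc (t * psi t + 1) ^ 2 = exp (t ^ 2 / 2) ^ 2 * (t * Phi t + exp (-t ^ 2 / 2)) ^ 2 := by
        rw [psi]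
        linear_combination (-(2 * t * exp (t ^ 2 / 2) * Phi t + 1 +
          exp (t ^ 2 / 2) * exp (-t ^ 2 / 2))) * hE
    _ ≤ exp (t ^ 2 / 2) ^ 2 * (Phi t * ((1 + t ^ 2) * Phi t + t * exp (-t ^ 2 / 2))) :=
        mul_le_mul_of_nonneg_left (sq_mul_Phi_add_exp_le t) (sq_nonneg _)
    _ = psi t * (psi t + t * (t * psi t + 1)) := by
        rw [psi]
        linear_combination (t * exp (t ^ 2 / 2) * Phi t) * hE

theorem integral_Iic_exp_neg_sub_sq_div_two (w x : ℝ) :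
    ∫ v in Iic w, exp (-(v - x) ^ 2 / 2) = Phi (w - x) := by
  have := (measurePreserving_sub_right volume x).setIntegral_preimage_emb
    (measurableEmbedding_subRight x) (fun s => exp (-s ^ 2 / 2)) (Iic (w - x))
  rwa [preimage_sub_const_Iic, sub_add_cancel] at this

noncomputable def psiIntegral (V_R V_F x : ℝ) : ℝ := ∫ t in (V_R - x)..(V_F - x), psi t

section psiIntegral

variable {V_R V_F : ℝ}

theorem Ifun_eq_psiIntegral (hV : V_R < V_F) (b N : ℝ) :
    Ifun V_R V_F b N = psiIntegral V_R V_F (b * N) := by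
  set x := b * N
  set F : ℝ → ℝ → ℝ := fun v w => {p : ℝ × ℝ | p.1 < p.2}.indicator
    (fun p => exp (-(p.1 - x) ^ 2 / 2) * exp ((p.2 - x) ^ 2 / 2)) (v, w)
  have hF : Integrable (Function.uncurry F)
      ((volume.restrict (Iic V_F)).prod (volume.restrict (Ioc V_R V_F))) :=
    ((integrable_exp_neg_sq_div_two.comp_sub_right x).integrableOn.mul_prod
      (by fun_prop : Continuous fun w => exp ((w - x) ^ 2 / 2)).integrableOn_Ioc).indicator
      (measurableSet_lt measurable_fst measurable_snd)
  have inner_w : ∀ v ∈ Iic V_F, exp (-(v - x) ^ 2 / 2) *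
      ∫ w in (max v V_R)..V_F, exp ((w - x) ^ 2 / 2) = ∫ w in Ioc V_R V_F, F v w := by
    intro v hv
    rw [intervalIntegral.integral_of_le (max_le hv hV.le), ← integral_const_mul,
      max_comm, ← Ioc_inter_Ioi, ← setIntegral_indicator measurableSet_Ioi]
    rfl
  have inner_v : ∀ w ∈ Ioc V_R V_F, ∫ v in Iic V_F, F v w = psi (w - x) := by
    intro w hw
    calc ∫ v in Iic V_F, F v w
        = ∫ v in Iic V_F ∩ Iio w, exp (-(v - x) ^ 2 / 2) * exp ((w - x) ^ 2 / 2) := by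
          rw [← setIntegral_indicator measurableSet_Iio]
          rfl
      _ = psi (w - x) := by
          rw [inter_eq_self_of_subset_right (Iio_subset_Iic hw.2), ← integral_Iic_eq_integral_Iio,
            integral_mul_const, integral_Iic_exp_neg_sub_sq_div_two, psi, mul_comm]
  rw [Ifun, setIntegral_congr_fun measurableSet_Iic inner_w, integral_integral_swap hF,
    setIntegral_congr_fun measurableSet_Ioc inner_v, ← intervalIntegral.integral_of_le hV.le,
    intervalIntegral.integral_comp_sub_right, psiIntegral]

theorem hasDerivAt_psiIntegral (x : ℝ) :
    HasDerivAt (psiIntegral V_R V_F) (psi (V_R - x) - psi (V_F - x)) x := by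
  have hprim : ∀ u, HasDerivAt (fun u => ∫ t in (0 : ℝ)..u, psi t) (psi u) u := fun u =>
    intervalIntegral.integral_hasDerivAt_right (continuous_psi.intervalIntegrable _ _)
      (continuous_psi.stronglyMeasurableAtFilter _ _) continuous_psi.continuousAt
  have hK : psiIntegral V_R V_F =
      fun x => (∫ t in (0 : ℝ)..(V_F - x), psi t) - ∫ t in (0 : ℝ)..(V_R - x), psi t :=
    funext fun x => (intervalIntegral.integral_interval_sub_left
      (continuous_psi.intervalIntegrable _ _) (continuous_psi.intervalIntegrable _ _)).symm
  rw [hK]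
  exact (((hprim _).comp x ((hasDerivAt_id x).const_sub V_F)).sub
    ((hprim _).comp x ((hasDerivAt_id x).const_sub V_R))).congr_deriv (by simp only [id]; ring)

theorem deriv_psiIntegral :
    deriv (psiIntegral V_R V_F) = fun x => psi (V_R - x) - psi (V_F - x) :=
  funext fun x => (hasDerivAt_psiIntegral x).deriv

theorem hasDerivAt_deriv_psiIntegral (x : ℝ) :
    HasDerivAt (deriv (psiIntegral V_R V_F))
      (((V_F - x) * psi (V_F - x) + 1) - ((V_R - x) * psi (V_R - x) + 1)) x := by
  rw [deriv_psiIntegral]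
  refine (((hasDerivAt_psi _).comp x ((hasDerivAt_id x).const_sub V_R)).sub
    ((hasDerivAt_psi _).comp x ((hasDerivAt_id x).const_sub V_F))).congr_deriv ?_
  simp only [id]
  ring

theorem psiIntegral_pos (hV : V_R < V_F) (x : ℝ) : 0 < psiIntegral V_R V_F x :=
  intervalIntegral.intervalIntegral_pos_of_pos_on (continuous_psi.intervalIntegrable _ _)
    (fun t _ => psi_pos t) (by linarith)

theorem deriv_psiIntegral_neg (hV : V_R < V_F) (x : ℝ) : deriv (psiIntegral V_R V_F) x < 0 := by
  rw [deriv_psiIntegral, sub_neg]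
  exact strictMono_psi (by linarith)

theorem sq_deriv_psiIntegral_le (hV : V_R < V_F) (x : ℝ) :
    deriv (psiIntegral V_R V_F) x ^ 2 ≤
      psiIntegral V_R V_F x * deriv (deriv (psiIntegral V_R V_F)) x := by
  rw [(hasDerivAt_deriv_psiIntegral x).deriv, deriv_psiIntegral, psiIntegral]
  have hac : V_R - x ≤ V_F - x := by linarith
  have hψ' : Continuous fun t => t * psi t + 1 := by fun_prop
  have hψ'' : Continuous fun t => psi t + t * (t * psi t + 1) := by fun_prop
  have hq : Continuous fun t => (t * psi t + 1) ^ 2 / psi t :=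
    (hψ'.pow 2).div continuous_psi fun t => (psi_pos t).ne'
  have hCS := sq_integral_le_integral_mul_integral_sq_div
    (μ := volume.restrict (Ioc (V_R - x) (V_F - x))) psi_pos continuous_psi.integrableOn_Ioc
    hψ'.integrableOn_Ioc hq.integrableOn_Ioc
  simp only [← intervalIntegral.integral_of_le hac] at hCS
  have hmono : ∫ t in (V_R - x)..(V_F - x), (t * psi t + 1) ^ 2 / psi t ≤
      ∫ t in (V_R - x)..(V_F - x), (psi t + t * (t * psi t + 1)) :=
    intervalIntegral.integral_mono_on hac (hq.intervalIntegrable _ _)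
      (hψ''.intervalIntegrable _ _) fun t _ =>
        (div_le_iff₀ (psi_pos t)).2 (by linarith [sq_mul_psi_add_one_le t])
  calc (psi (V_R - x) - psi (V_F - x)) ^ 2
      = (∫ t in (V_R - x)..(V_F - x), (t * psi t + 1)) ^ 2 := by
        rw [intervalIntegral.integral_eq_sub_of_hasDerivAt (fun t _ => hasDerivAt_psi t)
          (hψ'.intervalIntegrable _ _)]
        ring
    _ ≤ _ := hCS
    _ ≤ _ := mul_le_mul_of_nonneg_left hmono
        (intervalIntegral.integral_nonneg hac fun t _ => (psi_pos t).le)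
    _ = _ := by
        rw [intervalIntegral.integral_eq_sub_of_hasDerivAt
          (fun t _ => hasDerivAt_mul_psi_add_one t) (hψ''.intervalIntegrable _ _)]

end psiIntegral

/-- Lemma A.1: with `N(b)` the unique positive solution of `N·I(b,N) = 1` for `b ≤ 0`, the
function `g(b) = −∂_N I(b,N(b)) / I(b,N(b))²` (which equals the derivative of
`N ↦ 1/I(b,N)` at `N(b)`) is strictly increasing on `(−∞, 0]`. -/
theorem g_strictMonoOn (V_R V_F : ℝ) (hV : V_R < V_F)
    (Nb : ℝ → ℝ)
    (hNb : ∀ b : ℝ, b ≤ 0 →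
      0 < Nb b ∧ Nb b * Ifun V_R V_F b (Nb b) = 1 ∧
      ∀ N : ℝ, 0 < N → N * Ifun V_R V_F b N = 1 → N = Nb b) :
    (∀ b : ℝ, b ≤ 0 →
      -(deriv (fun N => Ifun V_R V_F b N) (Nb b)) / (Ifun V_R V_F b (Nb b)) ^ 2 =
        deriv (fun N => 1 / Ifun V_R V_F b N) (Nb b)) ∧
    StrictMonoOn
      (fun b => -(deriv (fun N => Ifun V_R V_F b N) (Nb b)) / (Ifun V_R V_F b (Nb b)) ^ 2)
      (Set.Iic 0) := by
  have hI : ∀ b, (fun N => Ifun V_R V_F b N) = fun N => psiIntegral V_R V_F (b * N) :=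
    fun b => funext (Ifun_eq_psiIntegral hV b)
  have hK : Differentiable ℝ (psiIntegral V_R V_F) :=
    fun x => (hasDerivAt_psiIntegral x).differentiableAt
  have hx_nonpos : MapsTo (fun b => b * Nb b) (Iic 0) (Iic 0) :=
    fun b hb => mul_nonpos_of_nonpos_of_nonneg hb (hNb b hb).1.le
  have hx_sol : LeftInvOn (fun x => x * psiIntegral V_R V_F x) (fun b => b * Nb b) (Iic 0) :=
    fun b hb => by dsimp only; rw [← Ifun_eq_psiIntegral hV, mul_assoc, (hNb b hb).2.1, mul_one]
  refine ⟨fun b _ => ?_, ?_⟩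
  · have hd : DifferentiableAt ℝ (fun N => Ifun V_R V_F b N) (Nb b) := by
      rw [hI]
      exact (hK _).comp _ (differentiableAt_id.const_mul b)
    simp only [one_div]
    rw [deriv_fun_inv'' hd (by rw [Ifun_eq_psiIntegral hV]; exact (psiIntegral_pos hV _).ne')]
  have hx : StrictMonoOn (fun b => b * Nb b) (Iic 0) :=
    (strictMonoOn_id_mul hK (psiIntegral_pos hV) fun x => (deriv_psiIntegral_neg hV x).le
      ).strictMonoOn_of_leftInvOn hx_nonpos hx_sol
  refine ((strictMonoOn_neg_mul_deriv_div hK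
    (fun x => (hasDerivAt_deriv_psiIntegral x).differentiableAt) (psiIntegral_pos hV)
    (deriv_psiIntegral_neg hV) (sq_deriv_psiIntegral_le hV)).comp hx hx_nonpos).congr
    fun b hb => ?_
  have hKpos := psiIntegral_pos hV (b * Nb b)
  simp only [Function.comp, hI, deriv_comp_mul_left, smul_eq_mul]
  rw [div_eq_div_iff hKpos.ne' (pow_ne_zero 2 hKpos.ne')]
  linear_combination
    -deriv (psiIntegral V_R V_F) (b * Nb b) * psiIntegral V_R V_F (b * Nb b) * hx_sol hb
end
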